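/- For any nondecreasing sequence of critical values τ = (τ_1, …, τ_m) ∈ [0,1]^m such that F_i(τ_m) < 1 for all i, the false discovery rate of the step-up procedure SU(τ) satisfies FDR(SU(τ)) ≤ max_{1 ≤ k ≤ m} max over subsets S ⊆ {1,…,m} with |S| = m−k+1 of (1/k) · Σ_{i∈S} F_i(τ_k)/(1 − F_i(τ_m)). -/

import Mathlib

open MeasureTheory ProbabilityTheory Finset

/-- Number of rejections of the step-up procedure with critical values `τ 1, …, τ m`
(convention `τ 0 = 0`): the largest `k ∈ {0, …, m}` such that at least `k` of the
p-values are `≤ τ k`. -/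
noncomputable def numRejSU (m : ℕ) (τ : ℕ → ℝ) (q : Fin m → ℝ) : ℕ :=
  sSup {k | k ≤ m ∧ k ≤ (univ.filter (fun j => q j ≤ τ k)).card}

/-- Rejection set of the step-up procedure. -/
noncomputable def rejSU (m : ℕ) (τ : ℕ → ℝ) (q : Fin m → ℝ) : Finset (Fin m) :=
  univ.filter (fun i => q i ≤ τ (numRejSU m τ q))

/-- False discovery proportion of a rejection set `R` w.r.t. the set of true nulls `H0`. -/
noncomputable def FDP (m : ℕ) (H0 R : Finset (Fin m)) : ℝ :=
  ((R ∩ H0).card : ℝ) / max (R.card : ℝ) 1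

/-!
Write `K` for the number of step-up rejections and `Kᵢ` for that number once `pᵢ` is replaced
by `0`. On `{pᵢ ≤ τ k}` one has `K = k ↔ Kᵢ = k`, so
`FDP = ∑_{i ∈ H0} ∑_k k⁻¹ 1{pᵢ ≤ τ k, Kᵢ = k}`. As `Kᵢ` is a function of the other p-values, it is
independent of `pᵢ`, whence for a true null
`P(pᵢ ≤ τ k, Kᵢ = k) ≤ Fᵢ(τ k) P(Kᵢ = k) ≤ Fᵢ(τ k) / (1 - Fᵢ(τ m)) · P(pᵢ > τ m, Kᵢ = k)`.
Finally all `i` with `pᵢ > τ m` share the same `Kᵢ = κ`, and there are at most `m - κ + 1` of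
them, so the resulting sum is pointwise at most the bound.
-/

noncomputable def countLE {ι : Type*} [Fintype ι] (q : ι → ℝ) (t : ℝ) : ℕ :=
  #{j | q j ≤ t}

section countLE

variable {ι : Type*} [Fintype ι]

lemma countLE_mono (q : ι → ℝ) : Monotone (countLE q) :=
  fun _ _ hst => card_le_card (monotone_filter_right _ fun _ _ hx => hx.trans hst)

lemma countLE_le_card (q : ι → ℝ) (t : ℝ) : countLE q t ≤ Fintype.card ι :=
  card_filter_le _ _

lemma countLE_add_card_lt (q : ι → ℝ) (t : ℝ) : countLE q t + #{j | t < q j} = Fintype.card ι := by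
  simpa only [countLE, not_le, card_univ] using
    card_filter_add_card_filter_not (s := univ) (q · ≤ t)

lemma countLE_update_zero [DecidableEq ι] (q : ι → ℝ) (i : ι) {t : ℝ} (ht : 0 ≤ t) :
    countLE (Function.update q i 0) t = if q i ≤ t then countLE q t else countLE q t + 1 := by
  have : (univ.filter fun j => Function.update q i 0 j ≤ t) =
      insert i (univ.filter fun j => q j ≤ t) := by
    ext j
    by_cases hj : j = i
    · subst hj; simp [ht]
    · simp [hj]
  simp only [countLE, this, card_insert_eq_ite, mem_filter, mem_univ, true_and]

lemma measurable_countLE (t : ℝ) : Measurable fun q : ι → ℝ => countLE q t := by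
  simp only [countLE, card_filter]
  exact Finset.measurable_sum _ fun j _ => Measurable.ite
    (measurableSet_le (measurable_pi_apply j) measurable_const) measurable_const measurable_const

end countLE

section AdaptiveBound

variable {m : ℕ}

noncomputable def adaptiveBound (m : ℕ) (c : Fin m → ℕ → ℝ) : ℝ :=
  sSup {x : ℝ | ∃ k, 1 ≤ k ∧ k ≤ m ∧ ∃ S : Finset (Fin m),
    S.card = m - k + 1 ∧ x = (1 / (k : ℝ)) * ∑ i ∈ S, c i k}

lemma adaptiveBound_nonneg {c : Fin m → ℕ → ℝ} (hc : ∀ i, ∀ k ≤ m, 0 ≤ c i k) :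
    0 ≤ adaptiveBound m c :=
  Real.sSup_nonneg <| by
    rintro _ ⟨k, -, hkm, S, -, rfl⟩
    exact mul_nonneg (by positivity) (sum_nonneg fun i _ => hc i k hkm)

lemma inv_mul_sum_le_adaptiveBound {c : Fin m → ℕ → ℝ} (hc : ∀ i, ∀ k ≤ m, 0 ≤ c i k)
    {k : ℕ} (hk1 : 1 ≤ k) (hkm : k ≤ m) {T : Finset (Fin m)} (hT : #T + k ≤ m + 1) :
    (k : ℝ)⁻¹ * ∑ i ∈ T, c i k ≤ adaptiveBound m c := by
  obtain ⟨S, hTS, hS⟩ := exists_superset_card_eq (s := T) (n := m - k + 1) (by omega)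
    (by rw [Fintype.card_fin]; omega)
  unfold adaptiveBound
  refine le_trans ?_ (le_csSup ?_ ⟨k, hk1, hkm, S, hS, rfl⟩)
  · rw [one_div]
    gcongr
    exact fun i _ _ => hc i k hkm
  · refine ((Set.finite_range fun kS : Fin (m + 1) × Finset (Fin m) =>
      (1 / (kS.1 : ℝ)) * ∑ i ∈ kS.2, c i kS.1).subset ?_).bddAbove
    rintro _ ⟨k, -, hkm, S, -, rfl⟩
    exact ⟨(⟨k, by omega⟩, S), rfl⟩

end AdaptiveBound

section StepUp

variable {m : ℕ} {τ : ℕ → ℝ}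

lemma numRejSU_isGreatest (q : Fin m → ℝ) :
    IsGreatest {k | k ≤ m ∧ k ≤ countLE q (τ k)} (numRejSU m τ q) :=
  have hbdd : BddAbove {k | k ≤ m ∧ k ≤ countLE q (τ k)} := ⟨m, fun _ hk => hk.1⟩
  ⟨Nat.sSup_mem ⟨0, by simp⟩ hbdd, fun _ hk => le_csSup hbdd hk⟩

lemma numRejSU_eq_iff (q : Fin m → ℝ) {k : ℕ} :
    numRejSU m τ q = k ↔
      k ≤ m ∧ k ≤ countLE q (τ k) ∧ ∀ l, k < l → l ≤ m → countLE q (τ l) < l := by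
  constructor
  · rintro rfl
    obtain ⟨⟨hkm, hk⟩, hmax⟩ := numRejSU_isGreatest (τ := τ) q
    exact ⟨hkm, hk, fun l hkl hlm => not_le.1 fun hl => (hmax ⟨hlm, hl⟩).not_gt hkl⟩
  · rintro ⟨hkm, hk, hgt⟩
    refine (numRejSU_isGreatest q).unique ⟨⟨hkm, hk⟩, fun l ⟨hlm, hl⟩ => ?_⟩
    exact not_lt.1 fun hkl => (hgt l hkl hlm).not_ge hl

lemma numRejSU_le (q : Fin m → ℝ) : numRejSU m τ q ≤ m :=
  ((numRejSU_eq_iff q).1 rfl).1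

lemma numRejSU_eq_iff_of_countLE_eq {q q' : Fin m → ℝ} {k : ℕ}
    (h : ∀ l, k ≤ l → l ≤ m → countLE q (τ l) = countLE q' (τ l)) :
    numRejSU m τ q = k ↔ numRejSU m τ q' = k := by
  rw [numRejSU_eq_iff, numRejSU_eq_iff]
  refine and_congr_right fun hkm => ?_
  rw [h k le_rfl hkm]
  exact and_congr_right fun _ => forall_congr' fun l => imp_congr_right fun hkl =>
    imp_congr_right fun hlm => by rw [h l hkl.le hlm]

lemma card_rejSU (hτ : MonotoneOn τ (Set.Iic m)) (q : Fin m → ℝ) :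
    #(rejSU m τ q) = numRejSU m τ q := by
  obtain ⟨hKm, hK, hgt⟩ := (numRejSU_eq_iff (τ := τ) q).1 rfl
  change countLE q (τ (numRejSU m τ q)) = _
  rcases hKm.lt_or_eq with hlt | heq
  · have hmono := countLE_mono q (hτ (Set.mem_Iic.2 hKm) (Set.mem_Iic.2 hlt) (Nat.le_succ _))
    have := hgt _ (Nat.lt_succ_self _) hlt
    omega
  · have := countLE_le_card q (τ (numRejSU m τ q))
    rw [Fintype.card_fin] at this
    omega

lemma FDP_eq_sum (H0 R : Finset (Fin m)) :
    FDP m H0 R = ∑ i ∈ H0, if i ∈ R then (#R : ℝ)⁻¹ else 0 := by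
  rw [← sum_filter, sum_const, nsmul_eq_mul, FDP, div_eq_mul_inv, filter_mem_eq_inter, inter_comm]
  rcases R.eq_empty_or_nonempty with rfl | hR
  · simp
  · rw [max_eq_left (Nat.one_le_cast.2 hR.card_pos)]

noncomputable def numRejSUZero (m : ℕ) (τ : ℕ → ℝ) (i : Fin m) (q : Fin m → ℝ) : ℕ :=
  numRejSU m τ (Function.update q i 0)

lemma numRejSUZero_le (q : Fin m → ℝ) (i : Fin m) : numRejSUZero m τ i q ≤ m :=
  numRejSU_le _

lemma one_le_numRejSUZero (hτ0 : ∀ l ≤ m, 0 ≤ τ l) (q : Fin m → ℝ) (i : Fin m) :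
    1 ≤ numRejSUZero m τ i q :=
  (numRejSU_isGreatest _).2 ⟨i.pos, card_pos.2 ⟨i, by simp [hτ0 1 i.pos]⟩⟩

/-- If `q i ≤ τ k`, replacing `q i` by `0` leaves the counts at every `τ l`, `l ≥ k`, unchanged. -/
lemma numRejSUZero_eq_iff (hτ : MonotoneOn τ (Set.Iic m)) (hτ0 : ∀ l ≤ m, 0 ≤ τ l)
    (q : Fin m → ℝ) (i : Fin m) {k : ℕ} (hqi : q i ≤ τ k) :
    numRejSUZero m τ i q = k ↔ numRejSU m τ q = k :=
  numRejSU_eq_iff_of_countLE_eq fun l hkl hlm => by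
    rw [countLE_update_zero q i (hτ0 l hlm),
      if_pos (hqi.trans (hτ (hkl.trans hlm : k ≤ m) hlm hkl))]

lemma countLE_update_zero_of_lt (hτ : MonotoneOn τ (Set.Iic m)) (hτ0 : ∀ l ≤ m, 0 ≤ τ l)
    (q : Fin m → ℝ) {i : Fin m} (hi : τ m < q i) {l : ℕ} (hlm : l ≤ m) :
    countLE (Function.update q i 0) (τ l) = countLE q (τ l) + 1 := by
  rw [countLE_update_zero q i (hτ0 l hlm),
    if_neg (not_le.2 ((hτ hlm Set.self_mem_Iic hlm).trans_lt hi))]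

lemma numRejSUZero_eq_of_lt (hτ : MonotoneOn τ (Set.Iic m)) (hτ0 : ∀ l ≤ m, 0 ≤ τ l)
    (q : Fin m → ℝ) {i j : Fin m} (hi : τ m < q i) (hj : τ m < q j) :
    numRejSUZero m τ i q = numRejSUZero m τ j q :=
  (numRejSU_eq_iff_of_countLE_eq fun l _ hlm => by
    rw [countLE_update_zero_of_lt hτ hτ0 q hi hlm, countLE_update_zero_of_lt hτ hτ0 q hj hlm]).1 rfl

lemma card_lt_add_numRejSUZero_le (hτ : MonotoneOn τ (Set.Iic m)) (hτ0 : ∀ l ≤ m, 0 ≤ τ l)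
    (q : Fin m → ℝ) {i : Fin m} (hi : τ m < q i) :
    #{j | τ m < q j} + numRejSUZero m τ i q ≤ m + 1 := by
  obtain ⟨hKm, hK, -⟩ := (numRejSU_eq_iff (τ := τ) (Function.update q i 0)).1 rfl
  rw [countLE_update_zero_of_lt hτ hτ0 q hi hKm] at hK
  have hmono := countLE_mono q (hτ hKm Set.self_mem_Iic hKm)
  have hsplit := countLE_add_card_lt q (τ m)
  rw [Fintype.card_fin] at hsplit
  unfold numRejSUZero
  omega

lemma FDP_rejSU_eq_sum (hτ : MonotoneOn τ (Set.Iic m)) (hτ0 : ∀ l ≤ m, 0 ≤ τ l)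
    (H0 : Finset (Fin m)) (q : Fin m → ℝ) :
    FDP m H0 (rejSU m τ q) = ∑ i ∈ H0, ∑ k ∈ range (m + 1),
      if q i ≤ τ k ∧ numRejSUZero m τ i q = k then (k : ℝ)⁻¹ else 0 := by
  rw [FDP_eq_sum, card_rejSU hτ]
  refine sum_congr rfl fun i _ => ?_
  have hswap : ∀ k, (q i ≤ τ k ∧ numRejSUZero m τ i q = k) ↔ (numRejSU m τ q = k ∧ q i ≤ τ k) :=
    fun k => ⟨fun ⟨hqi, h⟩ => ⟨(numRejSUZero_eq_iff hτ hτ0 q i hqi).1 h, hqi⟩,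
      fun ⟨h, hqi⟩ => ⟨hqi, (numRejSUZero_eq_iff hτ hτ0 q i hqi).2 h⟩⟩
  simp only [hswap, ite_and, sum_ite_eq, mem_range, Nat.lt_succ_of_le (numRejSU_le q), if_true,
    rejSU, mem_filter, mem_univ, true_and]

lemma sum_sum_ite_le_adaptiveBound (hτ : MonotoneOn τ (Set.Iic m)) (hτ0 : ∀ l ≤ m, 0 ≤ τ l)
    (H0 : Finset (Fin m)) {c : Fin m → ℕ → ℝ} (hc : ∀ i, ∀ k ≤ m, 0 ≤ c i k) (q : Fin m → ℝ) :
    ∑ i ∈ H0, ∑ k ∈ range (m + 1),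
      (if τ m < q i ∧ numRejSUZero m τ i q = k then (k : ℝ)⁻¹ * c i k else 0)
      ≤ adaptiveBound m c := by
  simp only [and_comm (a := τ m < q _), ite_and, sum_ite_eq, mem_range,
    Nat.lt_succ_of_le (numRejSUZero_le q _), if_true]
  rw [← sum_filter]
  rcases (H0.filter fun i => τ m < q i).eq_empty_or_nonempty with hT | ⟨i₀, hi₀⟩
  · simpa [hT] using adaptiveBound_nonneg hc
  have hi₀' := (mem_filter.1 hi₀).2
  rw [sum_congr rfl fun i hi => by rw [numRejSUZero_eq_of_lt hτ hτ0 q (mem_filter.1 hi).2 hi₀'],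
    ← mul_sum]
  refine inv_mul_sum_le_adaptiveBound hc (one_le_numRejSUZero hτ0 q i₀) (numRejSUZero_le q i₀) ?_
  have hsub := card_le_card (filter_subset_filter (fun j => τ m < q j) (subset_univ H0))
  have := card_lt_add_numRejSUZero_le hτ hτ0 q hi₀'
  omega

end StepUp

lemma ProbabilityTheory.iIndepFun.indepFun_comp_update {Ω ι γ β : Type*} [MeasurableSpace Ω]
    [MeasurableSpace γ] [MeasurableSpace β] [Fintype ι] [DecidableEq ι] {P : Measure Ω}
    {X : ι → Ω → γ} (hX : iIndepFun X P) (hXm : ∀ i, Measurable (X i)) {g : (ι → γ) → β}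
    (hg : Measurable g) (i : ι) (x : γ) :
    IndepFun (X i) (fun ω => g (Function.update (fun j => X j ω) i x)) P := by
  let extend : ((({i} : Finset ι)ᶜ : Finset ι) → γ) → ι → γ :=
    fun y j => if h : j = i then x else y ⟨j, by simp [h]⟩
  have hextend : Measurable extend := measurable_pi_lambda _ fun j => by
    by_cases h : j = i
    · simp only [extend, dif_pos h, measurable_const]
    · simp only [extend, dif_neg h]
      exact measurable_pi_apply _
  have key := (hX.indepFun_finset {i} {i}ᶜ disjoint_compl_right hXm).comp
    (measurable_pi_apply ⟨i, mem_singleton_self i⟩) (hg.comp hextend)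
  refine key.congr .rfl (.of_forall fun ω => congrArg g (funext fun j => ?_))
  by_cases h : j = i <;> simp [extend, h]

lemma ProbabilityTheory.IndepFun.measureReal_le_div_one_sub_mul {Ω β : Type*} [MeasurableSpace Ω]
    [MeasurableSpace β] {P : Measure Ω} [IsProbabilityMeasure P] {X : Ω → ℝ} {Y : Ω → β}
    (hXY : IndepFun X Y P) (hX : Measurable X) {B : Set β} (hB : MeasurableSet B)
    {u v a b : ℝ} (ha : 0 ≤ a) (hb0 : 0 ≤ b) (hb1 : b < 1)
    (hu : P {ω | X ω ≤ u} ≤ ENNReal.ofReal a) (hv : P {ω | X ω ≤ v} ≤ ENNReal.ofReal b) :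
    P.real {ω | X ω ≤ u ∧ Y ω ∈ B} ≤ a / (1 - b) * P.real {ω | v < X ω ∧ Y ω ∈ B} := by
  have hprod : ∀ s, MeasurableSet s →
      P.real (X ⁻¹' s ∩ Y ⁻¹' B) = P.real (X ⁻¹' s) * P.real (Y ⁻¹' B) := fun s hs => by
    simp only [measureReal_def, hXY.measure_inter_preimage_eq_mul s B hs hB, ENNReal.toReal_mul]
  have hu' : P.real (X ⁻¹' Set.Iic u) ≤ a := ENNReal.toReal_le_of_le_ofReal ha hu
  have hv' : 1 - b ≤ P.real (X ⁻¹' Set.Ioi v) := by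
    rw [← Set.compl_Iic, Set.preimage_compl, probReal_compl_eq_one_sub (hX measurableSet_Iic)]
    have : P.real (X ⁻¹' Set.Iic v) ≤ b := ENNReal.toReal_le_of_le_ofReal hb0 hv
    linarith
  change P.real (X ⁻¹' Set.Iic u ∩ Y ⁻¹' B) ≤ a / (1 - b) * P.real (X ⁻¹' Set.Ioi v ∩ Y ⁻¹' B)
  have hb : 0 < 1 - b := sub_pos.2 hb1
  rw [hprod _ measurableSet_Iic, hprod _ measurableSet_Ioi]
  calc P.real (X ⁻¹' Set.Iic u) * P.real (Y ⁻¹' B)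
      ≤ a * P.real (Y ⁻¹' B) := by gcongr
    _ = a / (1 - b) * ((1 - b) * P.real (Y ⁻¹' B)) := by field_simp
    _ ≤ a / (1 - b) * (P.real (X ⁻¹' Set.Ioi v) * P.real (Y ⁻¹' B)) := by gcongr

lemma MeasureTheory.integral_sum_sum_indicator_const {Ω ι κ : Type*} [MeasurableSpace Ω]
    {P : Measure Ω} [IsFiniteMeasure P] (s : Finset ι) (t : Finset κ) {A : ι → κ → Set Ω}
    (hA : ∀ i k, MeasurableSet (A i k)) (a : ι → κ → ℝ) :
    ∫ ω, ∑ i ∈ s, ∑ k ∈ t, (A i k).indicator (fun _ => a i k) ω ∂P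
      = ∑ i ∈ s, ∑ k ∈ t, P.real (A i k) * a i k := by
  have hint : ∀ i k, Integrable ((A i k).indicator fun _ => a i k) P :=
    fun i k => (integrable_const _).indicator (hA i k)
  rw [integral_finsetSum _ fun i _ => integrable_finsetSum _ fun k _ => hint i k]
  refine sum_congr rfl fun i _ => ?_
  rw [integral_finsetSum _ fun k _ => hint i k]
  exact sum_congr rfl fun k _ => by rw [integral_indicator_const _ (hA i k), smul_eq_mul]

lemma measurable_numRejSU (m : ℕ) (τ : ℕ → ℝ) : Measurable (numRejSU m τ) := by
  refine measurable_to_countable' fun k => ?_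
  have hset : numRejSU m τ ⁻¹' {k} = {q | k ≤ m ∧ k ≤ countLE q (τ k) ∧
      ∀ l, k < l → l ≤ m → countLE q (τ l) < l} := Set.ext fun q => numRejSU_eq_iff q
  rw [hset]
  have hc : ∀ l (s : Set ℕ), MeasurableSet ((fun q : Fin m → ℝ => countLE q (τ l)) ⁻¹' s) :=
    fun l _ => measurable_countLE (τ l) .of_discrete
  simp only [Set.ofPred_and, Set.ofPred_forall]
  exact (MeasurableSet.const _).inter ((hc k (Set.Ici k)).inter
    (.iInter fun l => .iInter fun _ => .iInter fun _ => hc l (Set.Iio l)))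

lemma measurable_numRejSUZero (m : ℕ) (τ : ℕ → ℝ) (i : Fin m) :
    Measurable (numRejSUZero m τ i) :=
  (measurable_numRejSU m τ).comp measurable_update_left

section Expectation

variable {Ω : Type*} [MeasurableSpace Ω] {P : Measure Ω} [IsProbabilityMeasure P] {m : ℕ}
  {τ : ℕ → ℝ} {p : Fin m → Ω → ℝ}

lemma measurableSet_numRejSUZero_eq (hp : ∀ i, Measurable (p i)) (i : Fin m) (k : ℕ)
    {r : ℝ → Prop} (hr : MeasurableSet {x | r x}) :
    MeasurableSet {ω | r (p i ω) ∧ numRejSUZero m τ i (fun j => p j ω) = k} :=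
  (hp i hr).inter <|
    (measurable_numRejSUZero m τ i).comp (measurable_pi_lambda _ hp) (measurableSet_singleton k)

lemma integral_FDP_rejSU (hτ : MonotoneOn τ (Set.Iic m)) (hτ0 : ∀ l ≤ m, 0 ≤ τ l)
    (hp : ∀ i, Measurable (p i)) (H0 : Finset (Fin m)) :
    ∫ ω, FDP m H0 (rejSU m τ (fun j => p j ω)) ∂P = ∑ i ∈ H0, ∑ k ∈ range (m + 1),
      P.real {ω | p i ω ≤ τ k ∧ numRejSUZero m τ i (fun j => p j ω) = k} * (k : ℝ)⁻¹ := by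
  rw [← integral_sum_sum_indicator_const _ _
    (fun i k => measurableSet_numRejSUZero_eq hp i k measurableSet_Iic)]
  simp only [FDP_rejSU_eq_sum hτ hτ0, Set.indicator_apply, Set.mem_ofPred_eq]

lemma sum_sum_measureReal_le_adaptiveBound (hτ : MonotoneOn τ (Set.Iic m))
    (hτ0 : ∀ l ≤ m, 0 ≤ τ l) (hp : ∀ i, Measurable (p i)) (H0 : Finset (Fin m))
    {c : Fin m → ℕ → ℝ} (hc : ∀ i, ∀ k ≤ m, 0 ≤ c i k) :
    ∑ i ∈ H0, ∑ k ∈ range (m + 1),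
      P.real {ω | τ m < p i ω ∧ numRejSUZero m τ i (fun j => p j ω) = k} * ((k : ℝ)⁻¹ * c i k)
      ≤ adaptiveBound m c := by
  have hA := fun i k => measurableSet_numRejSUZero_eq (τ := τ) hp i k (measurableSet_Ioi (a := τ m))
  rw [← integral_sum_sum_indicator_const _ _ hA]
  calc _ ≤ ∫ _, adaptiveBound m c ∂P :=
        integral_mono (integrable_finsetSum _ fun i _ => integrable_finsetSum _ fun k _ =>
          (integrable_const _).indicator (hA i k)) (integrable_const _) fun ω => by
            simpa only [Set.indicator_apply, Set.mem_ofPred_eq] using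
              sum_sum_ite_le_adaptiveBound hτ hτ0 H0 hc (fun j => p j ω)
    _ = adaptiveBound m c := by simp

end Expectation

theorem fdr_su_le_adaptive_bound_general
    {Ω : Type*} [MeasurableSpace Ω] (P : Measure Ω) [IsProbabilityMeasure P]
    (m : ℕ)
    (p : Fin m → Ω → ℝ) (hmeas : ∀ i, Measurable (p i))
    (hindep : iIndepFun p P)
    (H0 : Finset (Fin m))
    (F : Fin m → ℝ → ℝ)
    (hFrange : ∀ i, ∀ t ∈ Set.Icc (0 : ℝ) 1, F i t ∈ Set.Icc (0 : ℝ) 1)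
    (hnull : ∀ i ∈ H0, ∀ t ∈ Set.Icc (0 : ℝ) 1,
      P {ω | p i ω ≤ t} ≤ ENNReal.ofReal (F i t))
    (τ : ℕ → ℝ)
    (hτmono : ∀ k l, k ≤ l → l ≤ m → τ k ≤ τ l)
    (hτ01 : ∀ k ≤ m, τ k ∈ Set.Icc (0 : ℝ) 1)
    (hFτm : ∀ i, F i (τ m) < 1) :
    ∫ ω, FDP m H0 (rejSU m τ (fun j => p j ω)) ∂P
      ≤ sSup {x : ℝ | ∃ k, 1 ≤ k ∧ k ≤ m ∧ ∃ S : Finset (Fin m),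
          S.card = m - k + 1 ∧
          x = (1 / (k : ℝ)) * ∑ i ∈ S, F i (τ k) / (1 - F i (τ m))} := by
  have hτ : MonotoneOn τ (Set.Iic m) := fun k _ l hl hkl => hτmono k l hkl hl
  have hτ0 : ∀ k ≤ m, 0 ≤ τ k := fun k hk => (hτ01 k hk).1
  have hF : ∀ i, ∀ k ≤ m, 0 ≤ F i (τ k) := fun i k hk => (hFrange i _ (hτ01 k hk)).1
  set c : Fin m → ℕ → ℝ := fun i k => F i (τ k) / (1 - F i (τ m))
  have hc : ∀ i, ∀ k ≤ m, 0 ≤ c i k :=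
    fun i k hk => div_nonneg (hF i k hk) (sub_nonneg.2 (hFτm i).le)
  calc _ = _ := integral_FDP_rejSU hτ hτ0 hmeas H0
    _ ≤ ∑ i ∈ H0, ∑ k ∈ range (m + 1), P.real {ω | τ m < p i ω ∧
          numRejSUZero m τ i (fun j => p j ω) = k} * ((k : ℝ)⁻¹ * c i k) := by
      refine sum_le_sum fun i hi => sum_le_sum fun k hk => ?_
      have hkm : k ≤ m := Nat.lt_succ_iff.1 (mem_range.1 hk)
      have hindep_i := hindep.indepFun_comp_update hmeas (measurable_numRejSU m τ) i 0
      have hP : P.real {ω | p i ω ≤ τ k ∧ numRejSUZero m τ i (fun j => p j ω) = k} ≤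
          c i k * P.real {ω | τ m < p i ω ∧ numRejSUZero m τ i (fun j => p j ω) = k} :=
        hindep_i.measureReal_le_div_one_sub_mul (hmeas i) (measurableSet_singleton k)
          (hF i k hkm) (hF i m le_rfl) (hFτm i) (hnull i hi _ (hτ01 k hkm))
          (hnull i hi _ (hτ01 m le_rfl))
      exact (mul_le_mul_of_nonneg_right hP (by positivity)).trans_eq (by ring)
    _ ≤ adaptiveBound m c := sum_sum_measureReal_le_adaptiveBound hτ hτ0 hmeas H0 hc

/-- adaptive FDR bound for the step-up procedure. -/
theorem fdr_su_le_adaptive_bound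
    {Ω : Type*} [MeasurableSpace Ω] (P : Measure Ω) [IsProbabilityMeasure P]
    (m : ℕ) (hm : 1 ≤ m)
    (p : Fin m → Ω → ℝ) (hmeas : ∀ i, Measurable (p i))
    (hp01 : ∀ i ω, p i ω ∈ Set.Icc (0 : ℝ) 1)
    (hindep : iIndepFun p P)
    (H0 : Finset (Fin m))
    (F : Fin m → ℝ → ℝ)
    (hFmono : ∀ i, MonotoneOn (F i) (Set.Icc 0 1))
    (hFrange : ∀ i, ∀ t ∈ Set.Icc (0 : ℝ) 1, F i t ∈ Set.Icc (0 : ℝ) 1)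
    (hF0 : ∀ i, F i 0 = 0) (hF1 : ∀ i, F i 1 = 1)
    (hnull : ∀ i ∈ H0, ∀ t ∈ Set.Icc (0 : ℝ) 1,
      P {ω | p i ω ≤ t} ≤ ENNReal.ofReal (F i t))
    (τ : ℕ → ℝ) (hτ0 : τ 0 = 0)
    (hτmono : ∀ k l, k ≤ l → l ≤ m → τ k ≤ τ l)
    (hτ01 : ∀ k ≤ m, τ k ∈ Set.Icc (0 : ℝ) 1)
    (hFτm : ∀ i, F i (τ m) < 1) :
    ∫ ω, FDP m H0 (rejSU m τ (fun j => p j ω)) ∂P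
      ≤ sSup {x : ℝ | ∃ k, 1 ≤ k ∧ k ≤ m ∧ ∃ S : Finset (Fin m),
          S.card = m - k + 1 ∧
          x = (1 / (k : ℝ)) * ∑ i ∈ S, F i (τ k) / (1 - F i (τ m))} :=
  fdr_su_le_adaptive_bound_general P m p hmeas hindep H0 F hFrange hnull τ hτmono hτ01 hFτm
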